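/- arXiv:2111.04262 — 2 statements merged into one kernel-verified Lean document; each statement's English description precedes it below -/
import Mathlib

section
/- Let r ≥ 2, l ≥ 1, and k ≥ 2 be integers, and let T_{r,l} be the perfect r-ary tree of height l. Then CV_k(T_{r,l}) = (r^{l+1} − r^{(l+1) − ⌊(l+1)/(⌈k/2⌉+1)⌋(⌈k/2⌉+1)}) / (r^{⌈k/2⌉+1} − 1). -/
open SimpleGraph

/-- A graph is in a *failure state* for `k` if every connected component has
diameter less than `k`, i.e. every pair of mutually reachable vertices is at
distance less than `k`. -/
def FailureState {V : Type*} (G : SimpleGraph V) (k : ℕ) : Prop :=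
  ∀ u v : V, G.Reachable u v → G.dist u v < k

/-- `G` contains `m` pairwise vertex-disjoint paths of length `k`. -/
def HasDisjointPaths {V : Type*} (G : SimpleGraph V) (k m : ℕ) : Prop :=
  ∃ (u v : Fin m → V) (P : ∀ i, G.Walk (u i) (v i)),
    (∀ i, (P i).IsPath ∧ (P i).length = k) ∧
    ∀ i j, i ≠ j → ∀ x, x ∈ (P i).support → x ∉ (P j).support

/-- The `k`-diameter component vertex connectivity: the minimum size of a set of
vertices whose deletion leaves every component with diameter less than `k`. -/
noncomputable def CV {V : Type*} (G : SimpleGraph V) (k : ℕ) : ℕ :=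
  sInf {n | ∃ V' : Finset V, V'.card = n ∧
    FailureState (G.induce ((V' : Set V))ᶜ) k}

/-- The `k`-diameter component edge connectivity: the minimum size of a set of
edges whose deletion leaves every component with diameter less than `k`. -/
noncomputable def CE {V : Type*} (G : SimpleGraph V) (k : ℕ) : ℕ :=
  sInf {n | ∃ E' : Finset (Sym2 V), (E' : Set (Sym2 V)) ⊆ G.edgeSet ∧ E'.card = n ∧
    FailureState (G.deleteEdges (E' : Set (Sym2 V))) k}

/-- The `k`-diameter component connectivity function: the minimum over all
`p`-element vertex sets `V'` of `CE k (G - V')`. -/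
noncomputable def CM {V : Type*} (G : SimpleGraph V) (k p : ℕ) : ℕ :=
  sInf {q | ∃ V' : Finset V, V'.card = p ∧
    CE (G.induce ((V' : Set V))ᶜ) k = q}

/-- Vertices of the perfect `r`-ary tree of height `l`: words over `Fin r` of
length at most `l`. The root is the empty word, a vertex at depth `d` is a word
of length `d`, and the leaves are the words of length `l`. -/
def RAryVert (r l : ℕ) : Type := {ws : List (Fin r) // ws.length ≤ l}

/-- The perfect `r`-ary tree of height `l`: two vertices are adjacent iff one is
the parent of the other, i.e. one word is obtained from the other by removing
its head letter. -/
def raryTree (r l : ℕ) : SimpleGraph (RAryVert r l) where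
  Adj u v := (∃ a : Fin r, (u.val : List (Fin r)) = a :: v.val) ∨
             (∃ a : Fin r, (v.val : List (Fin r)) = a :: u.val)
  symm := by
    constructor
    intro u v h
    tauto
  loopless := by
    constructor
    intro u h
    rcases h with ⟨a, h⟩ | ⟨a, h⟩ <;>
      · apply_fun List.length at h
        simp at h

/-- The level of a vertex of `RAryVert r l`: leaves are on level `1` and the
root is on level `l + 1`. -/
def level {r l : ℕ} (w : RAryVert r l) : ℕ := l + 1 - w.val.length

/-!
Call a vertex a cut vertex if its level is a multiple of `h + 1`, where `h = ⌈k/2⌉`. Level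
`j (h + 1)` holds `r ^ (l + 1 - j (h + 1))` vertices, so there are
`∑_{j=1}^{M} r ^ (l + 1 - j (h + 1))` cut vertices, a geometric sum equal to the stated quotient.

Deleting the cut vertices leaves components that each lie within one band of at most `h`
consecutive levels, below a common top vertex at most `h - 1` steps above each of their vertices;
their diameters are therefore at most `2h - 2 < k`.

Conversely, let `V'` be any deletion set leaving a failure state, and `m` a cut vertex. The cone of
descendants of `m` at most `h` levels below it must meet `V'`: otherwise, descending from `m`
through two different children for `h` and `k - h` steps gives two vertices of one surviving
component at distance `k`. Distinct cut vertices have disjoint cones since their levels differ by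
at least `h + 1`, so `|V'|` is at least the number of cut vertices.
-/

open Finset

namespace SimpleGraph

variable {V : Type*} {G : SimpleGraph V}

lemma Reachable.apply_eq_of_adj {β : Type*} {f : V → β} (hf : ∀ x y, G.Adj x y → f x = f y)
    {u v : V} (h : G.Reachable u v) : f u = f v := by
  obtain ⟨p⟩ := h
  induction p with
  | nil => rfl
  | cons hadj _ ih => exact (hf _ _ hadj).trans ih

lemma dist_induce_le_length {s : Set V} {u v : V} (p : G.Walk u v)
    (hp : ∀ x ∈ p.support, x ∈ s) (hu : u ∈ s) (hv : v ∈ s) :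
    (G.induce s).dist ⟨u, hu⟩ ⟨v, hv⟩ ≤ p.length := by
  have hlen : (p.induce s hp).length = p.length :=
    ((p.induce s hp).length_map _).symm.trans (congrArg Walk.length (p.map_induce hp))
  exact hlen ▸ dist_le (p.induce s hp)

lemma dist_le_dist_induce {s : Set V} {u v : s} (h : (G.induce s).Reachable u v) :
    G.dist u v ≤ (G.induce s).dist u v := by
  obtain ⟨p, hp⟩ := h.exists_walk_length_eq_dist
  exact hp ▸ (p.length_map _) ▸ dist_le (p.map (Embedding.induce s).toHom)

end SimpleGraph

lemma Nat.add_one_mod_of_not_dvd {a n : ℕ} (h : ¬ n ∣ a + 1) : (a + 1) % n = a % n + 1 := by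
  rcases Nat.lt_or_ge (a % n + 1) n with hlt | hge
  · rw [← Nat.mod_add_mod, Nat.mod_eq_of_lt hlt]
  · rcases n.eq_zero_or_pos with rfl | hn
    · simp
    · have : a % n + 1 = n := by have := Nat.mod_lt a hn; omega
      exact absurd (Nat.dvd_of_mod_eq_zero (by rw [← Nat.mod_add_mod, this, Nat.mod_self])) h

lemma Nat.sum_pow_sub_succ_mul_mul_pow_sub_one {r c L : ℕ} (hr : 1 ≤ r) :
    ∀ {m : ℕ}, m * c ≤ L →
      (∑ j ∈ Finset.range m, r ^ (L - (j + 1) * c)) * (r ^ c - 1) = r ^ L - r ^ (L - m * c)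
  | 0, _ => by simp
  | m + 1, hm => by
    have hstep : r ^ (L - (m + 1) * c) * r ^ c = r ^ (L - m * c) := by
      rw [← pow_add]; congr 1; rw [Nat.succ_mul] at hm ⊢; omega
    have hle : m * c ≤ L := (Nat.mul_le_mul_right c m.le_succ).trans hm
    have h1 : r ^ (L - m * c) ≤ r ^ L := Nat.pow_le_pow_right hr (Nat.sub_le _ _)
    have h2 : r ^ (L - (m + 1) * c) ≤ r ^ (L - m * c) :=
      Nat.pow_le_pow_right hr (Nat.sub_le_sub_left (Nat.mul_le_mul_right c m.le_succ) _)
    rw [Finset.sum_range_succ, add_mul, sum_pow_sub_succ_mul_mul_pow_sub_one hr hle,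
      Nat.mul_sub, mul_one, hstep]
    omega

lemma Nat.lt_div_iff_add_one_mul_le {j L n : ℕ} : j < L / (n + 1) ↔ (j + 1) * (n + 1) ≤ L :=
  Nat.lt_iff_add_one_le.trans (Nat.le_div_iff_mul_le n.succ_pos)

namespace RAryVert

variable {r l : ℕ}

instance : DecidableEq (RAryVert r l) :=
  inferInstanceAs (DecidableEq {ws : List (Fin r) // ws.length ≤ l})

def ancestor (x : RAryVert r l) (i : ℕ) : RAryVert r l :=
  ⟨x.val.drop i, by rw [List.length_drop]; exact (Nat.sub_le _ _).trans x.2⟩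

@[simp] lemma ancestor_val (x : RAryVert r l) (i : ℕ) : (x.ancestor i).val = x.val.drop i := rfl

lemma ancestor_zero (x : RAryVert r l) : x.ancestor 0 = x := Subtype.ext List.drop_zero

lemma ancestor_suffix_ancestor (x : RAryVert r l) {i n : ℕ} (hin : i ≤ n) :
    (x.ancestor n).val <:+ (x.ancestor i).val := by
  simpa [List.drop_drop, hin] using List.drop_suffix (n - i) (x.val.drop i)

lemma level_ancestor (x : RAryVert r l) {i : ℕ} (hi : i ≤ x.val.length) :
    level (x.ancestor i) = level x + i := by
  have := x.2
  simp only [level, ancestor_val, List.length_drop]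
  omega

end RAryVert

namespace raryTree

def layer (r l d : ℕ) : Finset (RAryVert r l) :=
  ((univ : Finset (Fin d → Fin r)).image List.ofFn).subtype
    fun ws : List (Fin r) => ws.length ≤ l

def cutSet (r l h : ℕ) : Finset (RAryVert r l) :=
  (range ((l + 1) / (h + 1))).biUnion fun j => layer r l (l + 1 - (j + 1) * (h + 1))

variable {r l h k : ℕ}

lemma mem_layer {d : ℕ} {v : RAryVert r l} : v ∈ layer r l d ↔ v.val.length = d :=
  mem_subtype.trans <| by
    simp only [mem_image, mem_univ, true_and]
    refine ⟨fun ⟨f, hf⟩ => hf ▸ List.length_ofFn, ?_⟩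
    rintro rfl
    exact ⟨v.val.get, List.ofFn_get _⟩

lemma card_layer {d : ℕ} (hd : d ≤ l) : #(layer r l d) = r ^ d := by
  refine (card_subtype _ _).trans ?_
  rw [filter_true_of_mem, card_image_of_injective _ List.ofFn_injective, card_univ,
    Fintype.card_fun, Fintype.card_fin, Fintype.card_fin]
  simp only [mem_image, mem_univ, true_and]
  rintro _ ⟨f, rfl⟩
  exact List.length_ofFn.trans_le hd

lemma mem_cutSet {v : RAryVert r l} : v ∈ cutSet r l h ↔ (h + 1) ∣ level v := by
  have hv := v.2
  simp only [cutSet, mem_biUnion, mem_range, mem_layer, Nat.lt_div_iff_add_one_mul_le, level]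
  constructor
  · rintro ⟨j, hj, hlen⟩
    exact ⟨j + 1, by rw [mul_comm]; omega⟩
  · rintro ⟨c, hc⟩
    obtain ⟨j, rfl⟩ : ∃ j, c = j + 1 := Nat.exists_eq_add_one.2 (Nat.pos_of_ne_zero (by
      rintro rfl; omega))
    exact ⟨j, by rw [mul_comm]; omega, by rw [mul_comm]; omega⟩

lemma card_cutSet (hr : 2 ≤ r) :
    #(cutSet r l h) =
      (r ^ (l + 1) - r ^ (l + 1 - (l + 1) / (h + 1) * (h + 1))) / (r ^ (h + 1) - 1) := by
  have hsum :
      #(cutSet r l h) = ∑ j ∈ range ((l + 1) / (h + 1)), r ^ (l + 1 - (j + 1) * (h + 1)) := by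
    rw [cutSet, card_biUnion]
    · refine sum_congr rfl fun j _ => card_layer ?_
      have : 0 < (j + 1) * (h + 1) := by positivity
      omega
    · intro i hi j hj hij
      simp only [coe_range, Set.mem_Iio, Nat.lt_div_iff_add_one_mul_le] at hi hj
      refine disjoint_left.2 fun v hvi hvj => hij ?_
      rw [mem_layer] at hvi hvj
      have : (i + 1) * (h + 1) = (j + 1) * (h + 1) := by omega
      exact Nat.succ_injective (Nat.eq_of_mul_eq_mul_right h.succ_pos this)
  have hq : 0 < r ^ (h + 1) - 1 := Nat.sub_pos_of_lt (Nat.one_lt_pow h.succ_ne_zero hr)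
  rw [hsum, eq_comm]
  exact Nat.div_eq_of_eq_mul_left hq
    (Nat.sum_pow_sub_succ_mul_mul_pow_sub_one (by omega) (Nat.div_mul_le_self _ _)).symm

lemma adj_ancestor_succ (x : RAryVert r l) {i : ℕ} (hi : i < x.val.length) :
    (raryTree r l).Adj (x.ancestor i) (x.ancestor (i + 1)) :=
  Or.inl ⟨x.val[i], List.drop_eq_getElem_cons hi⟩

lemma exists_walk_ancestor (x : RAryVert r l) :
    ∀ {n : ℕ}, n ≤ x.val.length → ∃ p : (raryTree r l).Walk x (x.ancestor n),
      p.length = n ∧ ∀ y ∈ p.support, ∃ i ≤ n, y = x.ancestor i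
  | 0, _ => ⟨Walk.nil.copy rfl x.ancestor_zero.symm, rfl, by simp [x.ancestor_zero]⟩
  | n + 1, hn => by
    obtain ⟨p, hlen, hsupp⟩ := exists_walk_ancestor x (Nat.le_of_succ_le hn)
    refine ⟨p.concat (adj_ancestor_succ x hn), by simp [hlen], fun y hy => ?_⟩
    rw [Walk.support_concat, List.mem_append, List.mem_singleton] at hy
    rcases hy with hy | rfl
    · obtain ⟨i, hi, rfl⟩ := hsupp y hy
      exact ⟨i, hi.trans n.le_succ, rfl⟩
    · exact ⟨n + 1, le_rfl, rfl⟩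

lemma length_le_length_add_length {u v : RAryVert r l} (p : (raryTree r l).Walk u v) :
    u.val.length ≤ v.val.length + p.length := by
  induction p with
  | nil => simp
  | cons hadj _ ih =>
    rw [Walk.length_cons]
    rcases hadj with ⟨a, ha⟩ | ⟨a, ha⟩ <;>
      simp only [ha, List.length_cons] at ih ⊢ <;> omega

lemma mem_support_of_suffix_cons {m u v : RAryVert r l} {a : Fin r} (p : (raryTree r l).Walk u v)
    (hu : a :: m.val <:+ u.val) (hv : ¬ a :: m.val <:+ v.val) : m ∈ p.support := by
  induction p with
  | nil => exact absurd hu hv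
  | @cons x y z hadj q ih =>
    rw [Walk.support_cons]
    by_cases hy : a :: m.val <:+ y.val
    · exact List.mem_cons_of_mem _ (ih hy hv)
    · rcases hadj with ⟨b, hb⟩ | ⟨b, hb⟩
      · rw [hb, List.suffix_cons_iff, List.cons.injEq] at hu
        rcases hu with ⟨-, hmy⟩ | hsuf
        · exact List.mem_cons_of_mem _ (Subtype.ext hmy ▸ q.start_mem_support)
        · exact absurd hsuf hy
      · exact absurd (hu.trans (hb ▸ List.suffix_cons b x.val)) hy

lemma length_add_length_le_of_suffix_cons {m u v : RAryVert r l} {a : Fin r}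
    (p : (raryTree r l).Walk u v) (hu : a :: m.val <:+ u.val) (hv : ¬ a :: m.val <:+ v.val) :
    u.val.length + v.val.length ≤ 2 * m.val.length + p.length := by
  have hm := mem_support_of_suffix_cons p hu hv
  have h₁ := length_le_length_add_length (p.takeUntil m hm)
  have h₂ := length_le_length_add_length (p.dropUntil m hm).reverse
  rw [Walk.length_reverse] at h₂
  rw [← p.take_spec hm, Walk.length_append]
  omega

/-- The bands are the runs of levels strictly between consecutive multiples of `h + 1`;
this is the number of steps from `x` up to the top level of its band. -/
def distToBandTop (h : ℕ) (x : RAryVert r l) : ℕ := min x.val.length (h - level x % (h + 1))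

lemma distToBandTop_lt (hx : ¬ (h + 1) ∣ level x) : distToBandTop h x < h := by
  have : level x % (h + 1) ≠ 0 := mt Nat.dvd_of_mod_eq_zero hx
  have := Nat.mod_lt (level x) (by omega : 0 < h + 1)
  exact (min_le_right _ _).trans_lt (by omega)

lemma not_dvd_level_ancestor {x : RAryVert r l} (hx : ¬ (h + 1) ∣ level x) {i : ℕ}
    (hi : i ≤ distToBandTop h x) : ¬ (h + 1) ∣ level (x.ancestor i) := by
  have hix : i ≤ x.val.length := hi.trans (min_le_left _ _)
  have hih : level x % (h + 1) + i ≤ h := by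
    have := (min_le_right _ _).trans' hi
    have := Nat.mod_lt (level x) (by omega : 0 < h + 1)
    omega
  have hi' : i % (h + 1) = i := Nat.mod_eq_of_lt (by omega)
  have : level x % (h + 1) ≠ 0 := mt Nat.dvd_of_mod_eq_zero hx
  rw [RAryVert.level_ancestor x hix, Nat.dvd_iff_mod_eq_zero,
    Nat.add_mod_of_add_mod_lt (by omega), hi']
  omega

lemma ancestor_distToBandTop_of_parent {u v : RAryVert r l} {a : Fin r} (hu : u.val = a :: v.val)
    (hv : ¬ (h + 1) ∣ level v) :
    u.ancestor (distToBandTop h u) = v.ancestor (distToBandTop h v) := by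
  have hlen : u.val.length = v.val.length + 1 := by simp [hu]
  have hlevel : level v = level u + 1 := by
    have := u.2
    simp only [level]
    omega
  have hmod := Nat.add_one_mod_of_not_dvd (hlevel ▸ hv)
  have hstep : distToBandTop h u = distToBandTop h v + 1 := by
    have := Nat.mod_lt (level u + 1) (by omega : 0 < h + 1)
    simp only [distToBandTop, hlen, hlevel, hmod] at this ⊢
    omega
  exact Subtype.ext (by simp [hstep, hu])

lemma ancestor_distToBandTop_eq_of_adj {u v : RAryVert r l} (hadj : (raryTree r l).Adj u v)
    (hu : ¬ (h + 1) ∣ level u) (hv : ¬ (h + 1) ∣ level v) :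
    u.ancestor (distToBandTop h u) = v.ancestor (distToBandTop h v) := by
  rcases hadj with ⟨a, ha⟩ | ⟨a, ha⟩
  · exact ancestor_distToBandTop_of_parent ha hv
  · exact (ancestor_distToBandTop_of_parent ha hu).symm

lemma failureState_induce_compl_cutSet (hk : 2 * h ≤ k + 1) :
    FailureState ((raryTree r l).induce (↑(cutSet r l h))ᶜ) k := by
  set s : Set (RAryVert r l) := (↑(cutSet r l h))ᶜ
  have hs : ∀ x, x ∈ s ↔ ¬ (h + 1) ∣ level x := fun x => not_congr mem_cutSet
  intro u v huv
  have htop : u.1.ancestor (distToBandTop h u.1) = v.1.ancestor (distToBandTop h v.1) :=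
    huv.apply_eq_of_adj (f := fun x : s => x.1.ancestor (distToBandTop h x.1))
      fun x y hxy => ancestor_distToBandTop_eq_of_adj hxy ((hs x).1 x.2) ((hs y).1 y.2)
  have hclimb : ∀ x : s, ∃ p : (raryTree r l).Walk x (x.1.ancestor (distToBandTop h x.1)),
      p.length < h ∧ ∀ y ∈ p.support, y ∈ s := by
    intro x
    obtain ⟨p, hlen, hsupp⟩ := exists_walk_ancestor x.1 (min_le_left _ _)
    refine ⟨p, hlen ▸ distToBandTop_lt ((hs x).1 x.2), fun y hy => ?_⟩
    obtain ⟨i, hi, rfl⟩ := hsupp y hy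
    exact (hs _).2 (not_dvd_level_ancestor ((hs x).1 x.2) hi)
  obtain ⟨pu, hpu, hsu⟩ := hclimb u
  obtain ⟨pv, hpv, hsv⟩ := hclimb v
  have hsupp : ∀ y ∈ ((pu.copy rfl htop).append pv.reverse).support, y ∈ s := by
    intro y hy
    rw [Walk.mem_support_append_iff, Walk.support_copy, Walk.support_reverse,
      List.mem_reverse] at hy
    exact hy.elim (hsu y) (hsv y)
  calc _ ≤ ((pu.copy rfl htop).append pv.reverse).length := dist_induce_le_length _ hsupp _ _
    _ < k := by simp only [Walk.length_append, Walk.length_copy, Walk.length_reverse]; omega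

lemma exists_walk_from_descendant (m : RAryVert r l) (c : Fin r) {n : ℕ} (hn : 0 < n)
    (hnl : m.val.length + n ≤ l) : ∃ x : RAryVert r l,
      c :: m.val <:+ x.val ∧ x.val.length = m.val.length + n ∧ ∃ p : (raryTree r l).Walk x m,
        ∀ y ∈ p.support, m.val <:+ y.val ∧ y.val.length ≤ m.val.length + n := by
  obtain ⟨n, rfl⟩ := Nat.exists_eq_add_one.2 hn
  let x : RAryVert r l := ⟨List.replicate (n + 1) c ++ m.val, by simp; omega⟩
  have hxm : x.ancestor (n + 1) = m := Subtype.ext (List.drop_left' List.length_replicate)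
  have hxlen : x.val.length = m.val.length + (n + 1) := by simp [x, add_comm]
  obtain ⟨p, -, hsupp⟩ := exists_walk_ancestor x (n := n + 1) (by omega)
  refine ⟨x, ⟨List.replicate n c, by simp [x, List.replicate_succ']⟩, hxlen,
    p.copy rfl hxm, fun y hy => ?_⟩
  rw [Walk.support_copy] at hy
  obtain ⟨i, hi, rfl⟩ := hsupp y hy
  have := (List.drop_suffix i x.val).length_le
  exact ⟨hxm ▸ x.ancestor_suffix_ancestor hi, by simp only [RAryVert.ancestor_val]; omega⟩

lemma exists_mem_cone_of_failureState (hr : 2 ≤ r) (hkh : h + 1 ≤ k) (hk : k ≤ 2 * h)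
    {V' : Finset (RAryVert r l)} (hV' : FailureState ((raryTree r l).induce (↑V')ᶜ) k)
    {m : RAryVert r l} (hm : m.val.length + h ≤ l) :
    ∃ x ∈ V', m.val <:+ x.val ∧ x.val.length ≤ m.val.length + h := by
  by_contra! hcone
  set s : Set (RAryVert r l) := (↑V')ᶜ
  have hs : ∀ x, m.val <:+ x.val → x.val.length ≤ m.val.length + h → x ∈ s :=
    fun x hmx hx hxV => (hcone x hxV hmx).not_ge hx
  let a : Fin r := ⟨0, by omega⟩
  let b : Fin r := ⟨1, by omega⟩
  obtain ⟨u, hau, hu, pu, hsu⟩ := exists_walk_from_descendant m a (n := h) (by omega) hm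
  obtain ⟨v, hbv, hv, pv, hsv⟩ :=
    exists_walk_from_descendant m b (n := k - h) (by omega) (by omega)
  have hav : ¬ a :: m.val <:+ v.val := fun hav => by
    have := (List.suffix_of_suffix_length_le hav hbv (by simp)).eq_of_length (by simp)
    simp [a, b] at this
  have hw : ∀ y ∈ (pu.append pv.reverse).support, y ∈ s := by
    intro y hy
    rw [Walk.mem_support_append_iff, Walk.support_reverse, List.mem_reverse] at hy
    rcases hy with hy | hy
    · exact hs y (hsu y hy).1 (hsu y hy).2
    · exact hs y (hsv y hy).1 ((hsv y hy).2.trans (by omega))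
  have hreach := ((pu.append pv.reverse).induce s hw).reachable
  obtain ⟨q, hq⟩ := (pu.append pv.reverse).reachable.exists_walk_length_eq_dist
  have hq' := length_add_length_le_of_suffix_cons q hau hav
  have hdist : (raryTree r l).dist u v ≤ _ := dist_le_dist_induce hreach
  have := hV' _ _ hreach
  omega

lemma eq_of_suffix_of_dvd_level {m₁ m₂ x : RAryVert r l} (h₁ : (h + 1) ∣ level m₁)
    (h₂ : (h + 1) ∣ level m₂) (hx₁ : m₁.val <:+ x.val) (hx₂ : m₂.val <:+ x.val)
    (hlen₁ : x.val.length ≤ m₁.val.length + h)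
    (hlen₂ : x.val.length ≤ m₂.val.length + h) :
    m₁ = m₂ := by
  wlog hle : m₁.val.length ≤ m₂.val.length generalizing m₁ m₂ with H
  · exact (H h₂ h₁ hx₂ hx₁ hlen₂ hlen₁ (by omega)).symm
  have hx := hx₂.length_le
  have hlevel : level m₁ - level m₂ = 0 :=
    Nat.eq_zero_of_dvd_of_lt (Nat.dvd_sub h₁ h₂) (by simp only [level]; omega)
  refine Subtype.ext ((List.suffix_of_suffix_length_le hx₁ hx₂ hle).eq_of_length ?_)
  have := m₂.2
  simp only [level] at hlevel
  omega

lemma length_add_le_of_mem_cutSet {m : RAryVert r l} (hm : m ∈ cutSet r l h) :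
    m.val.length + h ≤ l := by
  have hpos : 0 < level m := by have := m.2; simp only [level]; omega
  have := Nat.le_of_dvd hpos (mem_cutSet.1 hm)
  simp only [level] at this
  omega

lemma card_cutSet_le_of_failureState (hr : 2 ≤ r) (hkh : h + 1 ≤ k) (hk : k ≤ 2 * h)
    {V' : Finset (RAryVert r l)} (hV' : FailureState ((raryTree r l).induce (↑V')ᶜ) k) :
    #(cutSet r l h) ≤ #V' :=
  card_le_card_of_forall_subsingleton
    (fun m x => m.val <:+ x.val ∧ x.val.length ≤ m.val.length + h)
    (fun _ hm => exists_mem_cone_of_failureState hr hkh hk hV' (length_add_le_of_mem_cutSet hm))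
    fun _ _ _ ⟨hm₁, hx₁, hl₁⟩ _ ⟨hm₂, hx₂, hl₂⟩ =>
      eq_of_suffix_of_dvd_level (mem_cutSet.1 hm₁) (mem_cutSet.1 hm₂) hx₁ hx₂ hl₁ hl₂

end raryTree

theorem CV_raryTree_general (r l k h M : ℕ) (hr : 2 ≤ r) (hk : 2 ≤ k)
    (hh : h = (k + 1) / 2) (hM : M = (l + 1) / (h + 1)) :
    CV (raryTree r l) k =
      (r ^ (l + 1) - r ^ (l + 1 - M * (h + 1))) / (r ^ (h + 1) - 1) := by
  subst hM
  rw [← raryTree.card_cutSet hr]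
  have hcut := raryTree.failureState_induce_compl_cutSet (r := r) (l := l) (k := k)
    (show 2 * h ≤ k + 1 by omega)
  refine le_antisymm (Nat.sInf_le ⟨_, rfl, hcut⟩) (le_csInf ⟨_, _, rfl, hcut⟩ ?_)
  rintro n ⟨V', rfl, hV'⟩
  exact raryTree.card_cutSet_le_of_failureState hr (by omega) (by omega) hV'

/-- The `k`-diameter component vertex connectivity of the
perfect `r`-ary tree of height `l`. -/
theorem CV_raryTree (r l k h M : ℕ) (hr : 2 ≤ r) (hl : 1 ≤ l) (hk : 2 ≤ k)
    (hh : h = (k + 1) / 2) (hM : M = (l + 1) / (h + 1)) :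
    CV (raryTree r l) k =
      (r ^ (l + 1) - r ^ (l + 1 - M * (h + 1))) / (r ^ (h + 1) - 1) :=
  CV_raryTree_general r l k h M hr hk hh hM
end

section
/- Let a and b be positive integers with a ≤ b, let k ≥ 2 be an integer, and let p be a nonnegative integer with p ≤ CV_k(K_{a,b}). For the complete bipartite graph K_{a,b}: if a = b = 1 then CM_k(K_{a,b}, p) = 0; if k > 2 and b > 1 then CM_k(K_{a,b}, p) = 0; and if k = 2 and b > 1 then CM_k(K_{a,b}, p) = (a − p)(b − 1). -/
open SimpleGraph

/-!
Deleting `p` vertices from `K_{a,b}` leaves a complete bipartite graph `K_{x,y}` with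
`x + y = a + b - p`, and `p ≤ CV_k(K_{a,b}) ≤ a` because deleting one side leaves no edges.
Every connected induced subgraph of a complete bipartite graph has diameter at most `2`, so for
`k > 2` no edge has to be deleted. For `k = 2` the surviving components must be single vertices or
single edges, so at most `min x y` of the `x * y` edges of `K_{x,y}` survive; over all admissible
splits `x * y - min x y` is smallest for `x = a - p`, `y = b`, and there deleting all edges but a
matching of the `a - p` remaining left vertices attains `(a - p) * (b - 1)`.
-/

open Finset

variable {V : Type*} {G H : SimpleGraph V} {k : ℕ}

lemma FailureState.mono {k' : ℕ} (h : FailureState H k) (hk : k ≤ k') : FailureState H k' :=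
  fun u v huv => (h u v huv).trans_le hk

lemma failureState_bot (hk : 0 < k) : FailureState (⊥ : SimpleGraph V) k := by
  intro u v huv
  rw [reachable_bot.mp huv, dist_self]
  exact hk

lemma FailureState.eq_or_adj (h : FailureState H 2) {u v : V} (huv : H.Reachable u v) :
    u = v ∨ H.Adj u v := by
  have := h u v huv
  interval_cases hd : H.dist u v
  · exact .inl (Reachable.dist_eq_zero_iff huv |>.mp hd)
  · exact .inr (dist_eq_one_iff_adj.mp hd)

lemma FailureState.eq_of_adj_of_adj (h : FailureState H 2) {u v w : V} (hu : H.Adj v u)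
    (hw : H.Adj v w) (huw : ¬ H.Adj u w) : u = w :=
  (h.eq_or_adj (hu.symm.reachable.trans hw.reachable)).resolve_right huw

lemma failureState_two_of_adj_unique (h : ∀ x y z, H.Adj x y → H.Adj x z → y = z) :
    FailureState H 2 := by
  have eq_or_adj : ∀ {u v : V}, H.Walk u v → u = v ∨ H.Adj u v := by
    intro u v w
    induction w with
    | nil => exact .inl rfl
    | cons huw _ ih =>
      rcases ih with rfl | hwv
      · exact .inr huw
      · exact .inl (h _ _ _ huw.symm hwv)
  rintro u v ⟨w⟩
  rcases eq_or_adj w with rfl | huv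
  · simp
  · rw [dist_eq_one_iff_adj.mpr huv]
    omega

lemma CE_eq_zero_of_failureState (h : FailureState H k) : CE H k = 0 :=
  Nat.sInf_eq_zero.mpr <| .inl ⟨∅, by simp, by simp, by simpa using h⟩

lemma CE_le_card {E : Finset (Sym2 V)} (hE : (E : Set (Sym2 V)) ⊆ H.edgeSet)
    (h : FailureState (H.deleteEdges E) k) : CE H k ≤ #E :=
  Nat.sInf_le ⟨E, hE, rfl, h⟩

lemma exists_card_eq_CE [Finite V] (H : SimpleGraph V) (hk : 0 < k) :
    ∃ E : Finset (Sym2 V), (E : Set (Sym2 V)) ⊆ H.edgeSet ∧ #E = CE H k ∧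
      FailureState (H.deleteEdges E) k := by
  refine Nat.sInf_mem (s := {n | ∃ E : Finset (Sym2 V), (E : Set (Sym2 V)) ⊆ H.edgeSet ∧
    #E = n ∧ FailureState (H.deleteEdges E) k}) ?_
  exact ⟨_, (Set.toFinite H.edgeSet).toFinset, by simp, rfl, by simpa using failureState_bot hk⟩

lemma CE_induce_le {S : Set V} {F : Finset (Sym2 V)} (hF : (F : Set (Sym2 V)) ⊆ G.edgeSet)
    (h : FailureState ((G.deleteEdges F).induce S) k) : CE (G.induce S) k ≤ #F := by
  classical
  have hinj := (Sym2.map.injective (Subtype.val_injective (p := (· ∈ S)))).injOn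
    (s := Sym2.map Subtype.val ⁻¹' (F : Set (Sym2 V)))
  refine (CE_le_card (E := F.preimage (Sym2.map Subtype.val) hinj) ?_ ?_).trans ?_
  · intro e he
    induction e
    simpa using hF (mem_preimage.mp he)
  · convert h using 1
    ext x y
    simp
  · rw [card_preimage]
    exact card_filter_le _ _

lemma card_mul_card_le_card_add_min [DecidableEq V] {E : Finset (Sym2 V)}
    (hE : FailureState (H.deleteEdges E) 2) {A B : Finset V} (hAB : ∀ u ∈ A, ∀ w ∈ B, H.Adj u w)
    (hA : ∀ u ∈ A, ∀ u' ∈ A, ¬ H.Adj u u') (hB : ∀ w ∈ B, ∀ w' ∈ B, ¬ H.Adj w w') :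
    #A * #B ≤ #E + min #A #B := by
  -- Two surviving edges from a common vertex into an independent set would be at distance 2, so
  -- the surviving pairs project injectively onto `A` and onto `B`.
  set P := A ×ˢ B
  have kept_adj : ∀ x ∈ P.filter (fun x => s(x.1, x.2) ∉ E), (H.deleteEdges E).Adj x.1 x.2 := by
    intro x hx
    simp only [mem_filter, P, mem_product] at hx
    exact deleteEdges_adj.mpr ⟨hAB _ hx.1.1 _ hx.1.2, hx.2⟩
  have deleted : #(P.filter fun x => s(x.1, x.2) ∈ E) ≤ #E := by
    refine card_le_card_of_injOn (fun x => s(x.1, x.2)) (fun x hx => (mem_filter.mp hx).2) ?_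
    rintro ⟨u, w⟩ hx ⟨u', w'⟩ hx' h
    simp only [coe_filter, P, mem_product, Set.mem_ofPred_eq] at hx hx'
    rcases Sym2.eq_iff.mp h with ⟨rfl, rfl⟩ | ⟨rfl, rfl⟩
    · rfl
    · exact ((hAB _ hx.1.1 _ hx'.1.2).ne rfl).elim
  have keptA : #(P.filter fun x => s(x.1, x.2) ∉ E) ≤ #A := by
    refine card_le_card_of_injOn Prod.fst (fun x hx => (mem_product.mp (mem_filter.mp hx).1).1) ?_
    rintro ⟨u, w⟩ hx ⟨u', w'⟩ hx' (rfl : u = u')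
    have hw := (mem_product.mp (mem_filter.mp hx).1).2
    have hw' := (mem_product.mp (mem_filter.mp hx').1).2
    exact Prod.ext rfl <| hE.eq_of_adj_of_adj (kept_adj _ hx) (kept_adj (u, w') hx')
      fun h => hB _ hw _ hw' (deleteEdges_adj.mp h).1
  have keptB : #(P.filter fun x => s(x.1, x.2) ∉ E) ≤ #B := by
    refine card_le_card_of_injOn Prod.snd (fun x hx => (mem_product.mp (mem_filter.mp hx).1).2) ?_
    rintro ⟨u, w⟩ hx ⟨u', w'⟩ hx' (rfl : w = w')
    have hu := (mem_product.mp (mem_filter.mp hx).1).1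
    have hu' := (mem_product.mp (mem_filter.mp hx').1).1
    refine Prod.ext (hE.eq_of_adj_of_adj (kept_adj _ hx).symm (kept_adj (u', w) hx').symm
      fun h => hA _ hu _ hu' (deleteEdges_adj.mp h).1) rfl
  have := card_filter_add_card_filter_not (s := P) (p := fun x => s(x.1, x.2) ∈ E)
  rw [card_product] at this
  omega

lemma sub_mul_pred_add_min_le {a b i j : ℕ} (hab : a ≤ b) (hi : i ≤ a) (hj : j ≤ b) :
    (a - (i + j)) * (b - 1) + min (a - i) (b - j) ≤ (a - i) * (b - j) := by
  obtain ⟨x, rfl⟩ := Nat.exists_eq_add_of_le hi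
  obtain ⟨y, rfl⟩ := Nat.exists_eq_add_of_le hj
  simp only [Nat.add_sub_cancel_left]
  rcases le_or_gt x j with hxj | hjx
  · rw [show i + x - (i + j) = 0 by omega, zero_mul, zero_add]
    rcases Nat.eq_zero_or_pos x with rfl | hx
    · simp
    · exact (min_le_right _ _).trans (Nat.le_mul_of_pos_left _ hx)
  · obtain ⟨d, rfl⟩ := Nat.exists_eq_add_of_lt hjx
    rw [show i + (j + d + 1) - (i + j) = d + 1 by omega]
    rcases le_total (j + d + 1) y with h | h
    · obtain ⟨e, rfl⟩ := Nat.exists_eq_add_of_le h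
      rw [min_eq_left h, show j + (j + d + 1 + e) - 1 = j + j + d + e by omega]
      nlinarith [Nat.le_mul_self j, Nat.zero_le (j * e)]
    · obtain ⟨e, rfl⟩ : ∃ e, y = d + 1 + e := ⟨y - (d + 1), by omega⟩
      have he : e ≤ j * e := by
        rcases Nat.eq_zero_or_pos j with rfl | hj
        · omega
        · exact Nat.le_mul_of_pos_left e hj
      rw [min_eq_right h, show j + (d + 1 + e) - 1 = j + d + e by omega]
      nlinarith

lemma CM_le_CE {p : ℕ} (V' : Finset V) (hV' : #V' = p) : CM G k p ≤ CE (G.induce (↑V')ᶜ) k :=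
  Nat.sInf_le ⟨V', hV', rfl⟩

lemma le_CM [Fintype V] {p n : ℕ} (hp : p ≤ Fintype.card V)
    (h : ∀ V' : Finset V, #V' = p → n ≤ CE (G.induce (↑V')ᶜ) k) : n ≤ CM G k p := by
  obtain ⟨V', -, hV'⟩ := exists_subset_card_eq (s := univ) (by simpa using hp)
  exact le_csInf ⟨_, V', hV', rfl⟩ (by rintro _ ⟨V', hV', rfl⟩; exact h V' hV')

section CompleteBipartite

variable {α β : Type*}

lemma completeBipartiteGraph_adj_iff_isLeft_ne (u v : α ⊕ β) :
    (completeBipartiteGraph α β).Adj u v ↔ u.isLeft ≠ v.isLeft := by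
  cases u <;> cases v <;> simp

lemma failureState_induce_completeBipartiteGraph (S : Set (α ⊕ β)) :
    FailureState ((completeBipartiteGraph α β).induce S) 3 := by
  intro u v huv
  obtain rfl | hne := eq_or_ne u v
  · simp
  by_cases huv' : ((completeBipartiteGraph α β).induce S).Adj u v
  · rw [dist_eq_one_iff_adj.mpr huv']
    omega
  obtain ⟨_ | @⟨_, m, _, hum, -⟩⟩ := huv
  · exact (hne rfl).elim
  have hmv : ((completeBipartiteGraph α β).induce S).Adj m v := by
    simp only [induce_adj, completeBipartiteGraph_adj_iff_isLeft_ne, ne_eq, not_not] at hum huv' ⊢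
    exact huv' ▸ Ne.symm hum
  have := dist_le (.cons hum (.cons hmv .nil))
  simp only [Walk.length_cons, Walk.length_nil] at this
  omega

lemma CV_completeBipartiteGraph_le [Fintype α] (hk : 0 < k) :
    CV (completeBipartiteGraph α β) k ≤ Fintype.card α := by
  classical
  refine Nat.sInf_le ⟨univ.map .inl, by simp, ?_⟩
  convert failureState_bot hk
  ext ⟨u, hu⟩ ⟨v, hv⟩
  simp only [Set.mem_compl_iff, mem_coe, mem_map, mem_univ, true_and] at hu hv
  cases u <;> cases v <;> simp_all

variable [Fintype α] [Fintype β]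

lemma CM_completeBipartiteGraph_of_two_lt {p : ℕ} (hk : 2 < k)
    (hp : p ≤ Fintype.card α + Fintype.card β) : CM (completeBipartiteGraph α β) k p = 0 := by
  obtain ⟨V', -, hV'⟩ := exists_subset_card_eq (s := (univ : Finset (α ⊕ β))) (by simpa using hp)
  exact Nat.eq_zero_of_le_zero <| (CM_le_CE V' hV').trans_eq <|
    CE_eq_zero_of_failureState <| (failureState_induce_completeBipartiteGraph _).mono hk

lemma le_CE_induce_compl_completeBipartiteGraph (hαβ : Fintype.card α ≤ Fintype.card β)
    (V' : Finset (α ⊕ β)) : (Fintype.card α - #V') * (Fintype.card β - 1) ≤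
      CE ((completeBipartiteGraph α β).induce (↑V')ᶜ) 2 := by
  classical
  set S : Set (α ⊕ β) := (↑V')ᶜ
  obtain ⟨E, -, hE, hfail⟩ := exists_card_eq_CE ((completeBipartiteGraph α β).induce S) two_pos
  let A : Finset S := (V'.toLeftᶜ.map .inl).subtype (· ∈ S)
  let B : Finset S := (V'.toRightᶜ.map .inr).subtype (· ∈ S)
  have hA : #A = Fintype.card α - #V'.toLeft := by
    rw [card_subtype, filter_true_of_mem, card_map, card_compl]
    simp [S]
  have hB : #B = Fintype.card β - #V'.toRight := by
    rw [card_subtype, filter_true_of_mem, card_map, card_compl]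
    simp [S]
  have left : ∀ u ∈ A, (u : α ⊕ β).isLeft := by
    intro u hu
    obtain ⟨i, -, hi⟩ := mem_map.mp (mem_subtype.mp hu)
    simp [← hi]
  have right : ∀ w ∈ B, (w : α ⊕ β).isLeft = false := by
    intro w hw
    obtain ⟨j, -, hj⟩ := mem_map.mp (mem_subtype.mp hw)
    simp [← hj]
  have hcount := card_mul_card_le_card_add_min hfail (A := A) (B := B)
    (fun u hu w hw => (completeBipartiteGraph_adj_iff_isLeft_ne _ _).mpr <| by
      simp [left u hu, right w hw])
    (fun u hu u' hu' => (completeBipartiteGraph_adj_iff_isLeft_ne _ _).not.mpr <| by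
      simp [left u hu, left u' hu'])
    (fun w hw w' hw' => (completeBipartiteGraph_adj_iff_isLeft_ne _ _).not.mpr <| by
      simp [right w hw, right w' hw'])
  have harith := sub_mul_pred_add_min_le hαβ (card_le_univ V'.toLeft) (card_le_univ V'.toRight)
  rw [card_toLeft_add_card_toRight] at harith
  rw [hA, hB, hE] at hcount
  omega

lemma CE_induce_compl_map_inl_le (f : α ↪ β) (L : Finset α) :
    CE ((completeBipartiteGraph α β).induce (↑(L.map .inl : Finset (α ⊕ β)))ᶜ) 2 ≤
      (Fintype.card α - #L) * (Fintype.card β - 1) := by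
  classical
  set G := completeBipartiteGraph α β
  -- `F` deletes every edge at the left vertices outside `L` except the matching `i ↦ f i`.
  let T : Finset (α × β) := (Lᶜ ×ˢ univ) \ Lᶜ.image fun i => (i, f i)
  let F : Finset (Sym2 (α ⊕ β)) := T.image fun x => s(.inl x.1, .inr x.2)
  have hF : (F : Set (Sym2 (α ⊕ β))) ⊆ G.edgeSet := by
    intro e he
    obtain ⟨x, -, rfl⟩ := mem_image.mp he
    simp [G]
  have hT : #T = (Fintype.card α - #L) * (Fintype.card β - 1) := by
    rw [card_sdiff_of_subset, card_product, card_image_of_injective, card_compl, card_univ,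
      Nat.mul_sub_one]
    · exact fun i j h => (Prod.ext_iff.mp h).1
    · intro x hx
      obtain ⟨i, hi, rfl⟩ := mem_image.mp hx
      simp [hi]
  have matched : ∀ i ∉ L, ∀ j, (G.deleteEdges F).Adj (.inl i) (.inr j) → j = f i := by
    intro i hi j hij
    by_contra hj
    refine (deleteEdges_adj.mp hij).2 (mem_image.mpr ⟨(i, j), ?_, rfl⟩)
    simp [T, hi, Ne.symm hj]
  refine (CE_induce_le hF ?_).trans (card_image_le.trans hT.le)
  apply failureState_two_of_adj_unique
  have not_mem : ∀ i, Sum.inl i ∉ (L.map .inl : Finset (α ⊕ β)) → i ∉ L := by simp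
  rintro ⟨x | x, hx⟩ ⟨y | y, hy⟩ ⟨z | z, hz⟩ hxy hxz
  any_goals (simp [G] at hxy hxz; done)
  · simp [matched x (not_mem x hx) y hxy, matched x (not_mem x hx) z hxz]
  · simpa using f.injective ((matched y (not_mem y hy) x hxy.symm).symm.trans
      (matched z (not_mem z hz) x hxz.symm))

lemma CM_completeBipartiteGraph_two {p : ℕ} (hαβ : Fintype.card α ≤ Fintype.card β)
    (hp : p ≤ Fintype.card α) :
    CM (completeBipartiteGraph α β) 2 p = (Fintype.card α - p) * (Fintype.card β - 1) := by
  refine le_antisymm ?_ <| le_CM (by simp; omega) fun V' hV' =>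
    hV' ▸ le_CE_induce_compl_completeBipartiteGraph hαβ V'
  obtain ⟨f⟩ := Function.Embedding.nonempty_of_card_le hαβ
  obtain ⟨L, -, hL⟩ := exists_subset_card_eq (s := (univ : Finset α)) (by simpa using hp)
  exact (CM_le_CE _ (by simpa using hL)).trans (hL ▸ CE_induce_compl_map_inl_le f L)

end CompleteBipartite

theorem CM_completeBipartite_general (a b k p : ℕ) (hab : a ≤ b)
    (hk : 2 ≤ k)
    (hp : p ≤ CV (completeBipartiteGraph (Fin a) (Fin b)) k) :
    (a = 1 ∧ b = 1 → CM (completeBipartiteGraph (Fin a) (Fin b)) k p = 0) ∧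
    (2 < k → 1 < b → CM (completeBipartiteGraph (Fin a) (Fin b)) k p = 0) ∧
    (k = 2 → 1 < b →
      CM (completeBipartiteGraph (Fin a) (Fin b)) k p = (a - p) * (b - 1)) := by
  have hpa : p ≤ a := hp.trans <| by
    simpa using CV_completeBipartiteGraph_le (α := Fin a) (β := Fin b) (by omega : 0 < k)
  have two : CM (completeBipartiteGraph (Fin a) (Fin b)) 2 p = (a - p) * (b - 1) := by
    simpa using CM_completeBipartiteGraph_two (α := Fin a) (β := Fin b) (by simpa) (by simpa)
  have two_lt : 2 < k → CM (completeBipartiteGraph (Fin a) (Fin b)) k p = 0 := fun hk3 =>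
    CM_completeBipartiteGraph_of_two_lt hk3 (by simp; omega)
  refine ⟨?_, fun hk3 _ => two_lt hk3, fun hk2 _ => hk2 ▸ two⟩
  rintro ⟨rfl, rfl⟩
  rcases hk.eq_or_lt with rfl | hk3
  · simpa using two
  · exact two_lt hk3

/-- The `k`-diameter component connectivity function of the
complete bipartite graph with part sizes `a ≤ b`. -/
theorem CM_completeBipartite (a b k p : ℕ) (ha : 0 < a) (hab : a ≤ b)
    (hk : 2 ≤ k)
    (hp : p ≤ CV (completeBipartiteGraph (Fin a) (Fin b)) k) :
    (a = 1 ∧ b = 1 → CM (completeBipartiteGraph (Fin a) (Fin b)) k p = 0) ∧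
    (2 < k → 1 < b → CM (completeBipartiteGraph (Fin a) (Fin b)) k p = 0) ∧
    (k = 2 → 1 < b →
      CM (completeBipartiteGraph (Fin a) (Fin b)) k p = (a - p) * (b - 1)) :=
  CM_completeBipartite_general a b k p hab hk hp
end
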